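/- For all even p ≥ 1, distinct nonzero a, b in F_2^n, and l = 2^n: E[(Δ_f(a) Δ_f(b))^{2p}] ≤ l^{2p} ((2p)!/p!)² (1 + 8p²/(l(2p-1)))^{2p-1}, where f is a uniformly random Boolean function. -/

import Mathlib

open Finset

def ac {n : ℕ} (f : (Fin n → ZMod 2) → ZMod 2) (u : Fin n → ZMod 2) : ℤ :=
  ∑ x : Fin n → ZMod 2, (-1 : ℤ) ^ ((f x + f (x + u)).val)

noncomputable def ev (n : ℕ) (X : ((Fin n → ZMod 2) → ZMod 2) → ℝ) : ℝ :=
  (∑ f : (Fin n → ZMod 2) → ZMod 2, X f) / Fintype.card ((Fin n → ZMod 2) → ZMod 2)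

def Mp : ℕ → ℕ
  | 0 => 1
  | p + 1 => (2 * p + 1) * Mp p

lemma mp_pos (p : ℕ) : 0 < Mp p := by
  induction p with
  | zero => simp [Mp]
  | succ p ih => exact Nat.mul_pos (by omega) ih

lemma mp_cast (p : ℕ) : (Mp p : ℝ) = (Nat.factorial (2 * p)) / (2 ^ p * Nat.factorial p) := by
  induction p with
  | zero => simp [Mp]
  | succ p ih =>
    have h2 : Nat.factorial (2 * (p+1)) = (2*p+2) * ((2*p+1) * Nat.factorial (2*p)) := by
      have h1 : (2 * (p + 1)) = (2 * p + 1) + 1 := by ring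
      rw [h1, Nat.factorial_succ, Nat.factorial_succ]
    have hf : (Nat.factorial p : ℝ) ≠ 0 := Nat.cast_ne_zero.2 (Nat.factorial_ne_zero p)
    have hf2 : (Nat.factorial (2*p) : ℝ) ≠ 0 := Nat.cast_ne_zero.2 (Nat.factorial_ne_zero _)
    have h2p : (2:ℝ) ^ p ≠ 0 := by positivity
    rw [show Mp (p+1) = (2*p+1) * Mp p from rfl]
    push_cast [h2, Nat.factorial_succ, ih]
    field_simp
    ring

lemma sum_range_even_odd {M : Type*} [AddCommMonoid M] (p : ℕ) (g : ℕ → M) :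
    ∑ j ∈ range (2*p+1), g j
      = (∑ q ∈ range (p+1), g (2*q)) + ∑ q ∈ range p, g (2*q+1) := by
  induction p with
  | zero => simp
  | succ p ih =>
    have h : 2*(p+1)+1 = (2*p+1) + 1 + 1 := by ring
    rw [h, Finset.sum_range_succ, Finset.sum_range_succ, ih,
      Finset.sum_range_succ (fun q => g (2*q)) (p+1),
      Finset.sum_range_succ (fun q => g (2*q+1)) p]
    have e1 : 2*p+1+1 = 2*(p+1) := by ring
    have e2 : 2*p+1 = 2*p+1 := rfl
    rw [e1]
    abel

lemma even_pow_add_sub (x y : ℝ) (p : ℕ) :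
    (x + y)^(2*p) + (x - y)^(2*p)
      = 2 * ∑ q ∈ range (p+1), (x^(2*q) * y^(2*p-2*q) * (Nat.choose (2*p) (2*q))) := by
  have hsub : x - y = x + (-y) := by ring
  rw [add_pow, hsub, add_pow, ← Finset.sum_add_distrib]
  have hterm : ∀ j ∈ range (2*p+1),
      x ^ j * y ^ (2*p - j) * (Nat.choose (2*p) j : ℝ)
        + x ^ j * (-y) ^ (2*p - j) * (Nat.choose (2*p) j : ℝ)
      = (1 + (-1:ℝ)^(2*p-j)) * (x^j * y^(2*p-j) * (Nat.choose (2*p) j : ℝ)) := by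
    intro j _
    rw [neg_pow]
    ring
  rw [Finset.sum_congr rfl hterm, sum_range_even_odd p]
  have hodd : ∀ q ∈ range p,
      (1 + (-1:ℝ)^(2*p-(2*q+1))) * (x^(2*q+1) * y^(2*p-(2*q+1)) * (Nat.choose (2*p) (2*q+1) : ℝ)) = 0 := by
    intro q hq
    have hq' : q < p := Finset.mem_range.1 hq
    have : Odd (2*p - (2*q+1)) := by
      refine Nat.Even.sub_odd (by omega) (by simp [Nat.even_iff]) (by simp [Nat.odd_iff])
    rw [this.neg_pow]
    simp
  rw [Finset.sum_congr rfl hodd, Finset.sum_const, smul_zero, add_zero, Finset.mul_sum]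
  refine Finset.sum_congr rfl ?_
  intro q hq
  have hq' : q ≤ p := by simpa using Nat.lt_succ_iff.1 (Finset.mem_range.1 hq)
  have : Even (2*p - 2*q) := by
    rw [Nat.even_sub (by omega)]
    simp [Nat.even_iff]
  rw [this.neg_pow]
  ring

lemma mp_mul_choose_eq (q r : ℕ) :
    (Mp (q+r) : ℝ) * (Nat.choose (q+r) q)
      = (Nat.choose (2*(q+r)) (2*q)) * Mp q * Mp r := by
  have h1 : q ≤ q + r := Nat.le_add_right q r
  have h2 : 2*q ≤ 2*(q+r) := by omega
  rw [mp_cast, mp_cast, mp_cast, Nat.cast_choose ℝ h1, Nat.cast_choose ℝ h2]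
  have e1 : q + r - q = r := by omega
  have e2 : 2*(q+r) - 2*q = 2*r := by omega
  rw [e1, e2]
  have e3 : 2*(q+r) = 2*q + 2*r := by ring
  rw [e3]
  have nz : ∀ m : ℕ, (Nat.factorial m : ℝ) ≠ 0 := fun m => Nat.cast_ne_zero.2 (Nat.factorial_ne_zero m)
  field_simp
  ring

lemma c1' {p q : ℕ} (h : q ≤ p) :
    (Nat.choose (2*p) (2*q) : ℝ) * Mp q ≤ (Mp p) * Nat.choose p q := by
  obtain ⟨r, rfl⟩ : ∃ r, p = q + r := ⟨p - q, by omega⟩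
  rw [mp_mul_choose_eq q r]
  have h1 : (1:ℝ) ≤ Mp r := by exact_mod_cast mp_pos r
  have h2 : (0:ℝ) ≤ (Nat.choose (2*(q+r)) (2*q) : ℝ) * Mp q := by positivity
  nlinarith

noncomputable def chiR (z : ZMod 2) : ℝ := (-1 : ℝ) ^ z.val

lemma chiR_zero : chiR 0 = 1 := rfl
lemma chiR_one : chiR 1 = -1 := by
  rw [chiR, show (1 : ZMod 2).val = 1 from rfl, pow_one]

lemma zmod2_sum {M : Type*} [AddCommMonoid M] (g : ZMod 2 → M) :
    ∑ v : ZMod 2, g v = g 0 + g 1 :=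
  Fin.sum_univ_two g

lemma khint_fin (N : ℕ) : ∀ (p : ℕ) (c : Fin N → ℝ),
    ∑ α : Fin N → ZMod 2, (∑ j, c j * chiR (α j))^(2*p)
      ≤ 2^N * (Mp p) * (∑ j, (c j)^2)^p := by
  induction N with
  | zero =>
    intro p c
    rcases Nat.eq_zero_or_pos p with hp | hp
    · subst hp; simp [Mp]
    · have h1 : (2*p) ≠ 0 := by omega
      have h2 : p ≠ 0 := by omega
      simp [Finset.univ_eq_empty, h1, h2, zero_pow]
  | succ N ih =>
    intro p c
    set t := ∑ j : Fin N, (c j.succ)^2 with ht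
    have htnn : 0 ≤ t := by positivity
    set e := Fin.consEquiv (fun _ : Fin (N+1) => ZMod 2)
    rw [← Equiv.sum_comp e (fun α => (∑ j, c j * chiR (α j))^(2*p)), Fintype.sum_prod_type]
    have hpt : ∀ (v : ZMod 2) (α' : Fin N → ZMod 2),
        (∑ j, c j * chiR ((e (v, α')) j)) = c 0 * chiR v + ∑ j, c j.succ * chiR (α' j) := by
      intro v α'
      have : e (v, α') = Fin.cons v α' := rfl
      rw [this, Fin.sum_univ_succ]
      simp
    -- inner sum over v
    have hv : ∀ α' : Fin N → ZMod 2,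
        (∑ v : ZMod 2, (∑ j, c j * chiR ((e (v, α')) j))^(2*p))
          = 2 * ∑ q ∈ range (p+1), ((∑ j, c j.succ * chiR (α' j))^(2*q)
              * (c 0)^(2*p-2*q) * (Nat.choose (2*p) (2*q))) := by
      intro α'
      rw [zmod2_sum (fun v => (∑ j, c j * chiR ((e (v, α')) j))^(2*p))]
      rw [hpt 0 α', hpt 1 α', chiR_zero, chiR_one]
      have h0 : c 0 * 1 + (∑ j, c j.succ * chiR (α' j))
          = (∑ j, c j.succ * chiR (α' j)) + c 0 := by ring
      have h1 : c 0 * (-1) + (∑ j, c j.succ * chiR (α' j))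
          = (∑ j, c j.succ * chiR (α' j)) - c 0 := by ring
      rw [h0, h1, even_pow_add_sub]
    rw [Finset.sum_comm]
    rw [Finset.sum_congr rfl (fun α' _ => hv α')]
    rw [← Finset.mul_sum, Finset.sum_comm]
    have hswap : ∑ q ∈ range (p+1), ∑ α' : Fin N → ZMod 2,
        ((∑ j, c j.succ * chiR (α' j))^(2*q) * (c 0)^(2*p-2*q) * (Nat.choose (2*p) (2*q)))
        = ∑ q ∈ range (p+1),
            (∑ α' : Fin N → ZMod 2, (∑ j, c j.succ * chiR (α' j))^(2*q))
              * ((c 0)^(2*p-2*q) * (Nat.choose (2*p) (2*q))) := by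
      refine Finset.sum_congr rfl (fun q _ => ?_)
      rw [Finset.sum_mul]
      refine Finset.sum_congr rfl (fun α' _ => ?_)
      ring
    rw [hswap]
    have hbound : ∑ q ∈ range (p+1),
        (∑ α' : Fin N → ZMod 2, (∑ j, c j.succ * chiR (α' j))^(2*q))
          * ((c 0)^(2*p-2*q) * (Nat.choose (2*p) (2*q)))
        ≤ ∑ q ∈ range (p+1),
            (2^N * (Mp p) * ((c 0)^2)^(p-q) * (Nat.choose p q) * t^q) := by
      refine Finset.sum_le_sum (fun q hq => ?_)
      have hqp : q ≤ p := Nat.lt_succ_iff.1 (Finset.mem_range.1 hq)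
      have h1 : (∑ α' : Fin N → ZMod 2, (∑ j, c j.succ * chiR (α' j))^(2*q))
          ≤ 2^N * (Mp q) * t^q := ih q (fun j => c j.succ)
      have hc0 : (0:ℝ) ≤ (c 0)^(2*p-2*q) * (Nat.choose (2*p) (2*q)) := by
        have : (2:ℕ)*p-2*q = 2*(p-q) := by omega
        rw [this, pow_mul]
        positivity
      have h2 : (∑ α' : Fin N → ZMod 2, (∑ j, c j.succ * chiR (α' j))^(2*q))
            * ((c 0)^(2*p-2*q) * (Nat.choose (2*p) (2*q)))
          ≤ (2^N * (Mp q) * t^q) * ((c 0)^(2*p-2*q) * (Nat.choose (2*p) (2*q))) :=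
        mul_le_mul_of_nonneg_right h1 hc0
      refine h2.trans ?_
      have he : (2:ℕ)*p-2*q = 2*(p-q) := by omega
      rw [he, pow_mul]
      have h3 : (Nat.choose (2*p) (2*q) : ℝ) * Mp q ≤ (Mp p) * Nat.choose p q := c1' hqp
      have htq : (0:ℝ) ≤ t^q := by positivity
      have hcc : (0:ℝ) ≤ ((c 0)^2)^(p-q) := by positivity
      have h2N : (0:ℝ) ≤ 2^N := by positivity
      nlinarith [mul_nonneg (mul_nonneg h2N htq) hcc]
    have hfin : (2:ℝ) * ∑ q ∈ range (p+1),
        (2^N * (Mp p) * ((c 0)^2)^(p-q) * (Nat.choose p q) * t^q)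
        = 2^(N+1) * (Mp p) * (∑ j : Fin (N+1), (c j)^2)^p := by
      rw [Fin.sum_univ_succ (fun j => (c j)^2)]
      rw [add_comm ((c 0)^2) (∑ j : Fin N, c j.succ ^ 2), add_pow]
      rw [Finset.mul_sum, Finset.mul_sum]
      refine Finset.sum_congr rfl (fun q hq => ?_)
      ring
    calc 2 * ∑ q ∈ range (p+1),
          (∑ α' : Fin N → ZMod 2, (∑ j, c j.succ * chiR (α' j))^(2*q))
            * ((c 0)^(2*p-2*q) * (Nat.choose (2*p) (2*q)))
        ≤ 2 * ∑ q ∈ range (p+1),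
            (2^N * (Mp p) * ((c 0)^2)^(p-q) * (Nat.choose p q) * t^q) := by linarith [hbound]
      _ = 2^(N+1) * (Mp p) * (∑ j : Fin (N+1), (c j)^2)^p := hfin

lemma khint {ι : Type*} [Fintype ι] [DecidableEq ι] (p : ℕ) (c : ι → ℝ) :
    ∑ α : ι → ZMod 2, (∑ k, c k * chiR (α k))^(2*p)
      ≤ 2^(Fintype.card ι) * (Mp p) * (∑ k, (c k)^2)^p := by
  set N := Fintype.card ι
  set e : Fin N ≃ ι := (Fintype.equivFin ι).symm
  set E : (Fin N → ZMod 2) ≃ (ι → ZMod 2) := Equiv.arrowCongr e (Equiv.refl (ZMod 2))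
  rw [← Equiv.sum_comp E (fun α => (∑ k, c k * chiR (α k))^(2*p))]
  have h1 : ∀ α' : Fin N → ZMod 2,
      (∑ k, c k * chiR ((E α') k)) = ∑ j, c (e j) * chiR (α' j) := by
    intro α'
    rw [← Equiv.sum_comp e (fun k => c k * chiR ((E α') k))]
    refine Finset.sum_congr rfl (fun j _ => ?_)
    have : (E α') (e j) = α' j := by simp [E, Equiv.arrowCongr]
    rw [this]
  have h2 : (∑ k, (c k)^2) = ∑ j, (c (e j))^2 := (Equiv.sum_comp e (fun k => (c k)^2)).symm
  rw [h2]
  calc ∑ α' : Fin N → ZMod 2, (∑ k, c k * chiR ((E α') k))^(2*p)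
      = ∑ α' : Fin N → ZMod 2, (∑ j, c (e j) * chiR (α' j))^(2*p) := by
        exact Finset.sum_congr rfl (fun α' _ => by rw [h1 α'])
    _ ≤ 2^N * (Mp p) * (∑ j, (c (e j))^2)^p := khint_fin N p (fun j => c (e j))

lemma zmod2_cases (w : ZMod 2) : w = 0 ∨ w = 1 := by revert w; decide

lemma chiR_add (u v : ZMod 2) : chiR (u + v) = chiR u * chiR v := by
  rcases zmod2_cases u with rfl | rfl <;> rcases zmod2_cases v with rfl | rfl <;>
    simp [chiR_zero, chiR_one, show (1:ZMod 2)+1 = 0 from by decide]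

lemma chiR_sq (v : ZMod 2) : chiR v * chiR v = 1 := by
  rcases zmod2_cases v with rfl | rfl <;> simp [chiR_zero, chiR_one]

lemma odd_vanish {ι : Type*} [Fintype ι] [DecidableEq ι] (j : ℕ) (hj : Odd j) :
    ∑ δ : ι → ZMod 2, (∑ k, chiR (δ k))^j = 0 := by
  have key : ∑ δ : ι → ZMod 2, (∑ k, chiR (δ k))^j
      = ∑ δ : ι → ZMod 2, (∑ k, chiR ((δ + 1) k))^j := by
    exact (Equiv.sum_comp (Equiv.addRight (1 : ι → ZMod 2))
      (fun δ => (∑ k, chiR (δ k))^j)).symm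
  have h2 : ∀ δ : ι → ZMod 2, (∑ k, chiR ((δ + 1) k)) = - ∑ k, chiR (δ k) := by
    intro δ
    rw [← Finset.sum_neg_distrib]
    refine Finset.sum_congr rfl (fun k _ => ?_)
    have : (δ + 1) k = δ k + 1 := rfl
    rw [this, chiR_add, chiR_one]
    ring
  have h3 : ∑ δ : ι → ZMod 2, (∑ k, chiR (δ k))^j
      = - ∑ δ : ι → ZMod 2, (∑ k, chiR (δ k))^j := by
    nth_rewrite 1 [key]
    rw [← Finset.sum_neg_distrib]
    refine Finset.sum_congr rfl (fun δ _ => ?_)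
    rw [h2 δ, hj.neg_pow]
  linarith

lemma mp_fact (q : ℕ) : Mp q * (2^q * Nat.factorial q) = Nat.factorial (2*q) := by
  induction q with
  | zero => simp [Mp]
  | succ q ih =>
    have h1 : 2*(q+1) = (2*q+1)+1 := by ring
    rw [h1, show Mp (q+1) = (2*q+1) * Mp q from rfl, Nat.factorial_succ (2*q+1),
      Nat.factorial_succ (2*q), Nat.factorial_succ q, ← ih]
    ring

lemma fact_le (k : ℕ) : ∀ (m c : ℕ), 1 ≤ c → m ≤ c →
    Nat.factorial m ≤ c^k * Nat.factorial (m - k) := by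
  induction k with
  | zero => intro m c _ _; simp
  | succ k ih =>
    intro m c hc hm
    rcases le_or_gt m k with h | h
    · have e1 : m - k = 0 := by omega
      have e2 : m - (k+1) = 0 := by omega
      have := ih m c hc hm
      rw [e1] at this
      rw [e2]
      calc Nat.factorial m ≤ c^k * Nat.factorial 0 := this
        _ ≤ c^(k+1) * Nat.factorial 0 := by
            have : c^k ≤ c^(k+1) := Nat.pow_le_pow_right (by omega) (by omega)
            exact Nat.mul_le_mul_right _ this
    · have := ih m c hc hm
      have e1 : m - k = (m - (k+1)) + 1 := by omega
      have h2 : Nat.factorial (m - k) = (m - k) * Nat.factorial (m - (k+1)) := by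
        rw [e1, Nat.factorial_succ, ← e1]
      have h3 : (m - k) ≤ c := by omega
      calc Nat.factorial m ≤ c^k * ((m-k) * Nat.factorial (m - (k+1))) := by rw [← h2]; exact this
        _ ≤ c^k * (c * Nat.factorial (m - (k+1))) := by
            exact Nat.mul_le_mul_left _ (Nat.mul_le_mul_right _ h3)
        _ = c^(k+1) * Nat.factorial (m - (k+1)) := by ring

lemma ineq_nat (p q : ℕ) (hp : 1 ≤ p) (hqp : q ≤ p) :
    Nat.factorial (2*p) * Nat.factorial (2*p-1-q) * (2*p-1)^q
      ≤ Nat.factorial (2*p-1) * Nat.factorial (2*p-2*q) * (4^q * p^(2*q)) := by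
  rcases Nat.eq_zero_or_pos q with rfl | hq
  · simp only [pow_zero, mul_one]
    have e : 2*p - 0 = 2*p := by omega
    have e2 : 2*p-1-0 = 2*p-1 := by omega
    rw [e2, show 2*p-2*0 = 2*p by omega]
    ring_nf
    exact le_refl _
  · have hfs : Nat.factorial (2*p) = (2*p) * Nat.factorial (2*p-1) := by
      have : 2*p = (2*p-1) + 1 := by omega
      rw [this, Nat.factorial_succ]
      congr 1 <;> omega
    have key : (2*p) * Nat.factorial (2*p-1-q) * (2*p-1)^q
        ≤ Nat.factorial (2*p-2*q) * (4^q * p^(2*q)) := by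
      have hf : Nat.factorial (2*p-1-q) ≤ (2*p)^(q-1) * Nat.factorial (2*p-2*q) := by
        have := fact_le (q-1) (2*p-1-q) (2*p) (by omega) (by omega)
        rwa [show 2*p-1-q-(q-1) = 2*p-2*q by omega] at this
      calc (2*p) * Nat.factorial (2*p-1-q) * (2*p-1)^q
          ≤ (2*p) * ((2*p)^(q-1) * Nat.factorial (2*p-2*q)) * (2*p)^q := by
            refine Nat.mul_le_mul ?_ (Nat.pow_le_pow_left (by omega) q)
            exact Nat.mul_le_mul_left _ hf
        _ = Nat.factorial (2*p-2*q) * ((2*p)^q * (2*p)^q) := by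
            have : (2*p) * (2*p)^(q-1) = (2*p)^q := by
              rw [← pow_succ']
              congr 1
              omega
            rw [show (2*p) * ((2*p)^(q-1) * Nat.factorial (2*p-2*q)) * (2*p)^q
              = ((2*p)*(2*p)^(q-1)) * Nat.factorial (2*p-2*q) * (2*p)^q from by ring, this]
            ring
        _ = Nat.factorial (2*p-2*q) * (4^q * p^(2*q)) := by
            congr 1
            rw [← pow_add, show q + q = 2*q by ring, pow_mul,
              show (2*p)^2 = 4 * p^2 by ring, mul_pow, ← pow_mul]
    calc Nat.factorial (2*p) * Nat.factorial (2*p-1-q) * (2*p-1)^q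
        = Nat.factorial (2*p-1) * ((2*p) * Nat.factorial (2*p-1-q) * (2*p-1)^q) := by
          rw [hfs]; ring
      _ ≤ Nat.factorial (2*p-1) * (Nat.factorial (2*p-2*q) * (4^q * p^(2*q))) :=
          Nat.mul_le_mul_left _ key
      _ = Nat.factorial (2*p-1) * Nat.factorial (2*p-2*q) * (4^q * p^(2*q)) := by ring

lemma c2core (p q : ℕ) (hp : 1 ≤ p) (hqp : q ≤ p) :
    Nat.choose (2*p) (2*q) * Mp q * (2*p-1)^q ≤ Nat.choose (2*p-1) q * 2^q * p^(2*q) := by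
  have hM : 0 < 2^q * Nat.factorial q * Nat.factorial (2*p-2*q) * Nat.factorial (2*p-1-q) :=
    by positivity
  refine Nat.le_of_mul_le_mul_right ?_ hM
  have lhs_eq : Nat.choose (2*p) (2*q) * Mp q * (2*p-1)^q
        * (2^q * Nat.factorial q * Nat.factorial (2*p-2*q) * Nat.factorial (2*p-1-q))
      = (Nat.factorial (2*p) * Nat.factorial (2*p-1-q) * (2*p-1)^q) := by
    have h1 : Nat.choose (2*p) (2*q) * Nat.factorial (2*q) * Nat.factorial (2*p - 2*q)
        = Nat.factorial (2*p) := Nat.choose_mul_factorial_mul_factorial (by omega)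
    calc Nat.choose (2*p) (2*q) * Mp q * (2*p-1)^q
          * (2^q * Nat.factorial q * Nat.factorial (2*p-2*q) * Nat.factorial (2*p-1-q))
        = (Nat.choose (2*p) (2*q) * (Mp q * (2^q * Nat.factorial q)) * Nat.factorial (2*p-2*q))
            * Nat.factorial (2*p-1-q) * (2*p-1)^q := by ring
      _ = (Nat.choose (2*p) (2*q) * Nat.factorial (2*q) * Nat.factorial (2*p-2*q))
            * Nat.factorial (2*p-1-q) * (2*p-1)^q := by rw [mp_fact]
      _ = _ := by rw [h1]
  have rhs_eq : Nat.choose (2*p-1) q * 2^q * p^(2*q)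
        * (2^q * Nat.factorial q * Nat.factorial (2*p-2*q) * Nat.factorial (2*p-1-q))
      = Nat.factorial (2*p-1) * Nat.factorial (2*p-2*q) * (4^q * p^(2*q)) := by
    have h1 : Nat.choose (2*p-1) q * Nat.factorial q * Nat.factorial (2*p-1 - q)
        = Nat.factorial (2*p-1) := Nat.choose_mul_factorial_mul_factorial (by omega)
    calc Nat.choose (2*p-1) q * 2^q * p^(2*q)
          * (2^q * Nat.factorial q * Nat.factorial (2*p-2*q) * Nat.factorial (2*p-1-q))
        = (Nat.choose (2*p-1) q * Nat.factorial q * Nat.factorial (2*p-1-q))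
            * Nat.factorial (2*p-2*q) * ((2^q * 2^q) * p^(2*q)) := by ring
      _ = Nat.factorial (2*p-1) * Nat.factorial (2*p-2*q) * ((2^q*2^q) * p^(2*q)) := by rw [h1]
      _ = _ := by rw [← pow_add, show q + q = 2*q by ring, show (4:ℕ) = 2^2 by norm_num,
              ← pow_mul, show 2*q = q*2 by ring]
  rw [lhs_eq, rhs_eq]
  exact ineq_nat p q hp hqp

lemma L2 {ι : Type*} [Fintype ι] [DecidableEq ι] (p : ℕ) (hp : 1 ≤ p)
    (hN : 1 ≤ Fintype.card ι) :
    ∑ δ : ι → ZMod 2, ((Fintype.card ι : ℝ) + ∑ k, chiR (δ k))^(2*p)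
      ≤ 2^(Fintype.card ι) * (Fintype.card ι : ℝ)^(2*p)
          * (1 + 2*(p:ℝ)^2/((Fintype.card ι)*(2*(p:ℝ)-1)))^(2*p-1) := by
  set N := Fintype.card ι with hNdef
  have hNr : (1:ℝ) ≤ (N:ℝ) := by exact_mod_cast hN
  have hNpos : (0:ℝ) < N := by linarith
  set x : ℝ := 2*(p:ℝ)^2/((N:ℝ)*(2*(p:ℝ)-1)) with hx
  have hpr : (1:ℝ) ≤ (p:ℝ) := by exact_mod_cast hp
  have hxnn : 0 ≤ x := by
    rw [hx]
    apply div_nonneg (by positivity)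
    nlinarith
  -- Step 1: expand
  have step1 : ∑ δ : ι → ZMod 2, ((N : ℝ) + ∑ k, chiR (δ k))^(2*p)
      = ∑ j ∈ range (2*p+1),
          (∑ δ : ι → ZMod 2, (∑ k, chiR (δ k))^j) * ((N:ℝ)^(2*p-j) * Nat.choose (2*p) j) := by
    have h1 : ∀ δ : ι → ZMod 2, ((N : ℝ) + ∑ k, chiR (δ k))^(2*p)
        = ∑ j ∈ range (2*p+1), (∑ k, chiR (δ k))^j * ((N:ℝ)^(2*p-j) * Nat.choose (2*p) j) := by
      intro δ
      rw [add_comm, add_pow]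
      exact Finset.sum_congr rfl (fun j _ => by ring)
    rw [Finset.sum_congr rfl (fun δ _ => h1 δ), Finset.sum_comm]
    exact Finset.sum_congr rfl (fun j _ => by rw [Finset.sum_mul])
  rw [step1, sum_range_even_odd p]
  have hodd : ∑ q ∈ range p,
      (∑ δ : ι → ZMod 2, (∑ k, chiR (δ k))^(2*q+1)) * ((N:ℝ)^(2*p-(2*q+1)) * Nat.choose (2*p) (2*q+1)) = 0 := by
    refine Finset.sum_eq_zero (fun q _ => ?_)
    rw [odd_vanish (2*q+1) ⟨q, by ring⟩, zero_mul]
  rw [hodd, add_zero]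
  -- Step 2: bound even terms via khint with c = 1
  have hkh : ∀ q : ℕ, (∑ δ : ι → ZMod 2, (∑ k, chiR (δ k))^(2*q)) ≤ 2^N * (Mp q) * (N:ℝ)^q := by
    intro q
    have h := khint (ι := ι) q (fun _ => (1:ℝ))
    simp only [one_mul, one_pow] at h
    simpa using h
  have step2 : ∑ q ∈ range (p+1),
      (∑ δ : ι → ZMod 2, (∑ k, chiR (δ k))^(2*q)) * ((N:ℝ)^(2*p-2*q) * Nat.choose (2*p) (2*q))
      ≤ ∑ q ∈ range (p+1), 2^N * ((Nat.choose (2*p) (2*q) : ℝ) * Mp q * (N:ℝ)^(2*p-q)) := by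
    refine Finset.sum_le_sum (fun q hq => ?_)
    have hqp : q ≤ p := Nat.lt_succ_iff.1 (Finset.mem_range.1 hq)
    have hnn : (0:ℝ) ≤ (N:ℝ)^(2*p-2*q) * Nat.choose (2*p) (2*q) := by positivity
    calc (∑ δ : ι → ZMod 2, (∑ k, chiR (δ k))^(2*q)) * ((N:ℝ)^(2*p-2*q) * Nat.choose (2*p) (2*q))
        ≤ (2^N * (Mp q) * (N:ℝ)^q) * ((N:ℝ)^(2*p-2*q) * Nat.choose (2*p) (2*q)) :=
          mul_le_mul_of_nonneg_right (hkh q) hnn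
      _ = 2^N * ((Nat.choose (2*p) (2*q) : ℝ) * Mp q * ((N:ℝ)^q * (N:ℝ)^(2*p-2*q))) := by ring
      _ = 2^N * ((Nat.choose (2*p) (2*q) : ℝ) * Mp q * (N:ℝ)^(2*p-q)) := by
          rw [← pow_add, show q + (2*p-2*q) = 2*p - q by omega]
  refine step2.trans ?_
  -- Step 3: termwise c2
  have step3 : ∀ q ∈ range (p+1),
      2^N * ((Nat.choose (2*p) (2*q) : ℝ) * Mp q * (N:ℝ)^(2*p-q))
        ≤ 2^N * ((N:ℝ)^(2*p) * ((Nat.choose (2*p-1) q : ℝ) * x^q)) := by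
    intro q hq
    have hqp : q ≤ p := Nat.lt_succ_iff.1 (Finset.mem_range.1 hq)
    have h2N : (0:ℝ) ≤ 2^N := by positivity
    refine mul_le_mul_of_nonneg_left ?_ h2N
    have hcast : ((2*p-1 : ℕ) : ℝ) = 2*(p:ℝ)-1 := by
      rw [Nat.cast_sub (by omega)]
      push_cast
      ring
    have h2p1pos : (0:ℝ) < (2*(p:ℝ)-1)^q := by
      apply pow_pos
      linarith
    have hcore : (Nat.choose (2*p) (2*q) : ℝ) * Mp q * (2*(p:ℝ)-1)^q
        ≤ (Nat.choose (2*p-1) q : ℝ) * (2*(p:ℝ)^2)^q := by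
      have h1 : (2*(p:ℝ)^2)^q = 2^q * (p:ℝ)^(2*q) := by
        rw [mul_pow, pow_mul]
      rw [h1, ← hcast]
      have := c2core p q hp hqp
      calc ((Nat.choose (2*p) (2*q) : ℝ)) * Mp q * ((((2*p-1):ℕ)):ℝ)^q
          = ((Nat.choose (2*p) (2*q) * Mp q * (2*p-1)^q : ℕ) : ℝ) := by push_cast; ring
        _ ≤ ((Nat.choose (2*p-1) q * 2^q * p^(2*q) : ℕ) : ℝ) := by exact_mod_cast this
        _ = (Nat.choose (2*p-1) q : ℝ) * 2^q * (p:ℝ)^(2*q) := by push_cast; ring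
        _ = (Nat.choose (2*p-1) q : ℝ) * (2^q * (p:ℝ)^(2*q)) := by ring
    have hrw : (N:ℝ)^(2*p) * ((Nat.choose (2*p-1) q : ℝ) * x^q)
        = ((Nat.choose (2*p-1) q : ℝ) * (2*(p:ℝ)^2)^q / (2*(p:ℝ)-1)^q) * (N:ℝ)^(2*p-q) := by
      have hNsplit : (N:ℝ)^(2*p) = (N:ℝ)^(2*p-q) * (N:ℝ)^q := by
        rw [← pow_add]
        congr 1
        omega
      rw [hx, div_pow, hNsplit, mul_pow (N:ℝ) (2*(p:ℝ)-1) q]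
      have hNqne : ((N:ℝ))^q ≠ 0 := by positivity
      have h2p1ne : ((2*(p:ℝ)-1))^q ≠ 0 := ne_of_gt h2p1pos
      field_simp
    rw [hrw]
    refine mul_le_mul_of_nonneg_right ?_ (by positivity)
    rw [le_div_iff₀ h2p1pos]
    exact hcore
  refine (Finset.sum_le_sum step3).trans ?_
  -- Step 4: binomial
  have hfinal : ∑ q ∈ range (p+1), 2^N * ((N:ℝ)^(2*p) * ((Nat.choose (2*p-1) q : ℝ) * x^q))
      ≤ 2^N * (N:ℝ)^(2*p) * (1+x)^(2*p-1) := by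
    have hexp : (1+x)^(2*p-1) = ∑ r ∈ range (2*p-1+1), x^r * (Nat.choose (2*p-1) r : ℝ) := by
      rw [add_comm, add_pow]
      exact Finset.sum_congr rfl (fun r _ => by rw [one_pow, mul_one])
    rw [hexp, Finset.mul_sum]
    have hsub : range (p+1) ⊆ range (2*p-1+1) := by
      apply Finset.range_subset_range.2
      omega
    calc ∑ q ∈ range (p+1), 2^N * ((N:ℝ)^(2*p) * ((Nat.choose (2*p-1) q : ℝ) * x^q))
        = ∑ q ∈ range (p+1), 2^N * (N:ℝ)^(2*p) * (x^q * (Nat.choose (2*p-1) q : ℝ)) := by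
          exact Finset.sum_congr rfl (fun q _ => by ring)
      _ ≤ ∑ q ∈ range (2*p-1+1), 2^N * (N:ℝ)^(2*p) * (x^q * (Nat.choose (2*p-1) q : ℝ)) := by
          refine Finset.sum_le_sum_of_subset_of_nonneg hsub (fun r _ _ => ?_)
          have : (0:ℝ) ≤ x^r := pow_nonneg hxnn r
          positivity
      _ = ∑ r ∈ range (2*p-1+1), 2^N * (N:ℝ)^(2*p) * (x^r * (Nat.choose (2*p-1) r : ℝ)) := rfl
  exact hfinal

abbrev W2 := ZMod 2 × ZMod 2
abbrev Z4 := ZMod 2 × ZMod 2 × ZMod 2 × ZMod 2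

def chiZ (z : ZMod 2) : ℤ := (-1) ^ z.val

/-- local autocorrelation-type sum over the 4-element group -/
def locA (w0 : W2) (ψ : W2 → ZMod 2) : ℤ := ∑ w : W2, chiZ (ψ w + ψ (w + w0))

/-- coordinates: (δ, α, γ, d) -/
def pinv (z : Z4) : W2 → ZMod 2 :=
  fun w => z.2.2.2 + w.1 * z.2.1 + w.2 * z.2.2.1 + w.1 * w.2 * z.1

def pfwd (ψ : W2 → ZMod 2) : Z4 :=
  (ψ (0,0) + ψ (1,0) + ψ (0,1) + ψ (1,1),
   ψ (0,0) + ψ (1,0),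
   ψ (0,0) + ψ (0,1),
   ψ (0,0))

def pEquiv : (W2 → ZMod 2) ≃ Z4 where
  toFun := pfwd
  invFun := pinv
  left_inv := by decide
  right_inv := by decide

lemma locA_pinv : ∀ z : Z4,
    locA (1,0) (pinv z) = 2 * (chiZ z.2.1 + chiZ (z.2.1 + z.1)) := by decide

lemma locB_pinv : ∀ z : Z4,
    locA (0,1) (pinv z) = 2 * (chiZ z.2.2.1 + chiZ (z.2.2.1 + z.1)) := by decide

lemma cast_chiZ (z : ZMod 2) : ((chiZ z : ℤ) : ℝ) = chiR z := by
  rw [chiZ, chiR]; push_cast; ring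

def acW {ι : Type*} [Fintype ι] [DecidableEq ι] (φ : W2 × ι → ZMod 2) (w0 : W2) : ℤ :=
  ∑ z : W2 × ι, chiZ (φ z + φ (z.1 + w0, z.2))

lemma chiR_c (a d : ZMod 2) :
    2*(chiR a + chiR (a + d)) = (2*(1 + chiR d)) * chiR a := by
  rw [chiR_add]; ring

lemma chiR_c2 (d : ZMod 2) : (2*(1 + chiR d))^2 = 8 + 8 * chiR d := by
  rcases zmod2_cases d with rfl | rfl <;> norm_num [chiR_zero, chiR_one]

theorem main_bound {ι : Type*} [Fintype ι] [DecidableEq ι] (p : ℕ) (hp : 1 ≤ p)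
    (hN : 1 ≤ Fintype.card ι) :
    ∑ φ : W2 × ι → ZMod 2, ((acW φ (1,0) : ℝ) * (acW φ (0,1) : ℝ))^(2*p)
      ≤ 2^(4*Fintype.card ι) * 64^p * ((Mp p : ℝ))^2 * (Fintype.card ι : ℝ)^(2*p)
          * (1 + 2*(p:ℝ)^2/((Fintype.card ι : ℝ)*(2*(p:ℝ)-1)))^(2*p-1) := by
  classical
  set N := Fintype.card ι with hNdef
  -- the global change of variables
  set EE : (ι → Z4) ≃ (W2 × ι → ZMod 2) :=
    ((Equiv.piCongrRight (fun _ : ι => pEquiv.symm)).trans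
      ((Equiv.curry ι W2 (ZMod 2)).symm.trans
        (Equiv.arrowCongr (Equiv.prodComm ι W2) (Equiv.refl (ZMod 2))))) with hEE
  have hEEapp : ∀ (Z : ι → Z4) (w : W2) (k : ι), (EE Z) (w, k) = pinv (Z k) w := by
    intro Z w k
    rfl
  rw [← Equiv.sum_comp EE (fun φ => ((acW φ (1,0) : ℝ) * (acW φ (0,1) : ℝ))^(2*p))]
  -- rewrite the two ac sums
  have hacA : ∀ Z : ι → Z4, ((acW (EE Z) (1,0) : ℤ) : ℝ)
      = ∑ k, (2*(1 + chiR ((Z k).1))) * chiR ((Z k).2.1) := by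
    intro Z
    rw [acW, Fintype.sum_prod_type_right]
    push_cast
    refine Finset.sum_congr rfl (fun k _ => ?_)
    have h1 : ∑ w : W2, ((chiZ ((EE Z) (w, k) + (EE Z) (w + (1,0), k)) : ℤ) : ℝ)
        = ((locA (1,0) (pinv (Z k)) : ℤ) : ℝ) := by
      rw [locA]
      push_cast
      refine Finset.sum_congr rfl (fun w _ => ?_)
      rw [hEEapp, hEEapp]
    rw [h1, locA_pinv (Z k)]
    push_cast [cast_chiZ]
    rw [chiR_c]
  have hacB : ∀ Z : ι → Z4, ((acW (EE Z) (0,1) : ℤ) : ℝ)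
      = ∑ k, (2*(1 + chiR ((Z k).1))) * chiR ((Z k).2.2.1) := by
    intro Z
    rw [acW, Fintype.sum_prod_type_right]
    push_cast
    refine Finset.sum_congr rfl (fun k _ => ?_)
    have h1 : ∑ w : W2, ((chiZ ((EE Z) (w, k) + (EE Z) (w + (0,1), k)) : ℤ) : ℝ)
        = ((locA (0,1) (pinv (Z k)) : ℤ) : ℝ) := by
      rw [locA]
      push_cast
      refine Finset.sum_congr rfl (fun w _ => ?_)
      rw [hEEapp, hEEapp]
    rw [h1, locB_pinv (Z k)]
    push_cast [cast_chiZ]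
    rw [chiR_c]
  -- now the component splitting
  set e : ((ι → ZMod 2) × (ι → ZMod 2) × (ι → ZMod 2) × (ι → ZMod 2)) ≃ (ι → Z4) :=
    { toFun := fun t => fun k => (t.1 k, t.2.1 k, t.2.2.1 k, t.2.2.2 k)
      invFun := fun Z => (fun k => (Z k).1, fun k => (Z k).2.1,
        fun k => (Z k).2.2.1, fun k => (Z k).2.2.2)
      left_inv := fun _ => rfl
      right_inv := fun _ => rfl } with he
  have hcardfun : Fintype.card (ι → ZMod 2) = 2^N := by
    rw [Fintype.card_fun]
    congr 1
  have hpow_nonneg : ∀ y : ℝ, 0 ≤ y^(2*p) := by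
    intro y
    rw [pow_mul]
    positivity
  have hsum_nonneg : ∀ (g : (ι → ZMod 2) → ℝ), 0 ≤ ∑ v : ι → ZMod 2, (g v)^(2*p) :=
    fun g => Finset.sum_nonneg (fun v _ => hpow_nonneg (g v))
  calc ∑ Z : ι → Z4, ((acW (EE Z) (1,0) : ℝ) * (acW (EE Z) (0,1) : ℝ))^(2*p)
      = ∑ Z : ι → Z4, ((∑ k, (2*(1 + chiR ((Z k).1))) * chiR ((Z k).2.1))
          * (∑ k, (2*(1 + chiR ((Z k).1))) * chiR ((Z k).2.2.1)))^(2*p) := by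
        refine Finset.sum_congr rfl (fun Z _ => ?_)
        rw [hacA Z, hacB Z]
    _ = ∑ t : ((ι → ZMod 2) × (ι → ZMod 2) × (ι → ZMod 2) × (ι → ZMod 2)),
          ((∑ k, (2*(1 + chiR (t.1 k))) * chiR (t.2.1 k))
            * (∑ k, (2*(1 + chiR (t.1 k))) * chiR (t.2.2.1 k)))^(2*p) :=
        (Equiv.sum_comp e (fun Z => ((∑ k, (2*(1 + chiR ((Z k).1))) * chiR ((Z k).2.1))
          * (∑ k, (2*(1 + chiR ((Z k).1))) * chiR ((Z k).2.2.1)))^(2*p))).symm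
    _ = ∑ δf : ι → ZMod 2, ∑ αf : ι → ZMod 2, ∑ γf : ι → ZMod 2, ∑ _df : ι → ZMod 2,
          ((∑ k, (2*(1 + chiR (δf k))) * chiR (αf k))
            * (∑ k, (2*(1 + chiR (δf k))) * chiR (γf k)))^(2*p) := by
        rw [Fintype.sum_prod_type]
        refine Finset.sum_congr rfl (fun δf _ => ?_)
        rw [Fintype.sum_prod_type]
        refine Finset.sum_congr rfl (fun αf _ => ?_)
        rw [Fintype.sum_prod_type]
    _ = ∑ δf : ι → ZMod 2, (2:ℝ)^N *
          ((∑ αf : ι → ZMod 2, (∑ k, (2*(1 + chiR (δf k))) * chiR (αf k))^(2*p))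
            * (∑ γf : ι → ZMod 2, (∑ k, (2*(1 + chiR (δf k))) * chiR (γf k))^(2*p))) := by
        refine Finset.sum_congr rfl (fun δf _ => ?_)
        have h1 : ∀ αf γf : ι → ZMod 2,
            (∑ _df : ι → ZMod 2, ((∑ k, (2*(1 + chiR (δf k))) * chiR (αf k))
              * (∑ k, (2*(1 + chiR (δf k))) * chiR (γf k)))^(2*p))
            = (2:ℝ)^N * ((∑ k, (2*(1 + chiR (δf k))) * chiR (αf k))^(2*p)
                * (∑ k, (2*(1 + chiR (δf k))) * chiR (γf k))^(2*p)) := by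
          intro αf γf
          rw [Finset.sum_const, Finset.card_univ, hcardfun, mul_pow, nsmul_eq_mul]
          push_cast
          ring
        rw [Finset.sum_congr rfl (fun αf _ => Finset.sum_congr rfl (fun γf _ => h1 αf γf))]
        rw [Finset.sum_congr rfl (fun αf _ => (Finset.mul_sum _ _ _).symm),
          ← Finset.mul_sum]
        congr 1
        rw [Finset.sum_mul_sum]
    _ ≤ ∑ δf : ι → ZMod 2, (2:ℝ)^N *
          ((2^N * (Mp p) * (8*((N:ℝ) + ∑ k, chiR (δf k)))^p)
            * (2^N * (Mp p) * (8*((N:ℝ) + ∑ k, chiR (δf k)))^p)) := by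
        refine Finset.sum_le_sum (fun δf _ => ?_)
        refine mul_le_mul_of_nonneg_left ?_ (by positivity)
        have hc2 : ∑ k, ((2*(1 + chiR (δf k))))^2 = 8*((N:ℝ) + ∑ k, chiR (δf k)) := by
          rw [Finset.sum_congr rfl (fun k _ => chiR_c2 (δf k)), Finset.sum_add_distrib,
            Finset.sum_const, Finset.card_univ, ← Finset.mul_sum]
          rw [nsmul_eq_mul]
          ring
        have hA := khint (ι := ι) p (fun k => 2*(1 + chiR (δf k)))
        rw [hc2] at hA
        have hAnn : (0:ℝ) ≤ 2^N * (Mp p) * (8*((N:ℝ) + ∑ k, chiR (δf k)))^p := by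
          have h8 : (0:ℝ) ≤ 8*((N:ℝ) + ∑ k, chiR (δf k)) := by
            rw [← hc2]
            exact Finset.sum_nonneg (fun k _ => sq_nonneg _)
          positivity
        exact mul_le_mul hA hA (hsum_nonneg _) hAnn
    _ = (2:ℝ)^N * 4^N * ((Mp p : ℝ))^2 * 64^p *
          ∑ δf : ι → ZMod 2, ((N:ℝ) + ∑ k, chiR (δf k))^(2*p) := by
        rw [Finset.mul_sum]
        refine Finset.sum_congr rfl (fun δf _ => ?_)
        have h1 : ((8*((N:ℝ) + ∑ k, chiR (δf k)))^p) * ((8*((N:ℝ) + ∑ k, chiR (δf k)))^p)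
            = 64^p * ((N:ℝ) + ∑ k, chiR (δf k))^(2*p) := by
          rw [← pow_add, show p + p = 2*p by ring, mul_pow]
          congr 1
          rw [pow_mul]
          norm_num
        rw [show (2:ℝ)^N * ((2^N * (Mp p) * (8*((N:ℝ) + ∑ k, chiR (δf k)))^p)
            * (2^N * (Mp p) * (8*((N:ℝ) + ∑ k, chiR (δf k)))^p))
          = (2:ℝ)^N * ((2:ℝ)^N * (2:ℝ)^N) * ((Mp p:ℝ))^2
              * (((8*((N:ℝ) + ∑ k, chiR (δf k)))^p) * ((8*((N:ℝ) + ∑ k, chiR (δf k)))^p)) from by ring,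
          h1, show (2:ℝ)^N * ((2:ℝ)^N * (2:ℝ)^N) = (2:ℝ)^N * 4^N from by
            rw [show (4:ℝ) = 2^2 by norm_num, ← pow_mul]
            ring_nf]
        ring
    _ ≤ (2:ℝ)^N * 4^N * ((Mp p : ℝ))^2 * 64^p *
          (2^N * (N : ℝ)^(2*p) * (1 + 2*(p:ℝ)^2/((N:ℝ)*(2*(p:ℝ)-1)))^(2*p-1)) := by
        refine mul_le_mul_of_nonneg_left ?_ (by positivity)
        exact L2 p hp hN
    _ = 2^(4*N) * 64^p * ((Mp p : ℝ))^2 * (N : ℝ)^(2*p)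
          * (1 + 2*(p:ℝ)^2/((N:ℝ)*(2*(p:ℝ)-1)))^(2*p-1) := by
        rw [show (4:ℝ)^N = 2^(2*N) by rw [show (4:ℝ) = 2^2 by norm_num, ← pow_mul],
          show (2:ℝ)^(4*N) = 2^N * 2^(2*N) * 2^N by rw [← pow_add, ← pow_add]; congr 1; ring]
        ring

theorem stmt10 (n p : ℕ) (hp : 1 ≤ p) (hpe : Even p)
    (a b : Fin n → ZMod 2) (ha : a ≠ 0) (hb : b ≠ 0) (hab : a ≠ b) :
    ev n (fun f => ((ac f a : ℝ) * (ac f b : ℝ)) ^ (2 * p))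
      ≤ (2 ^ n : ℝ) ^ (2 * p) * ((Nat.factorial (2 * p) : ℝ) / (Nat.factorial p)) ^ 2 *
          (1 + 8 * p ^ 2 / (2 ^ n * (2 * (p : ℝ) - 1))) ^ (2 * p - 1) := by
  classical
  set T : (ZMod 2 × ZMod 2) →ₗ[ZMod 2] (Fin n → ZMod 2) :=
    LinearMap.coprod (LinearMap.toSpanSingleton (ZMod 2) (Fin n → ZMod 2) a)
      (LinearMap.toSpanSingleton (ZMod 2) (Fin n → ZMod 2) b) with hT
  have hTapp : ∀ w : ZMod 2 × ZMod 2, T w = w.1 • a + w.2 • b := by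
    intro w
    simp [hT, LinearMap.toSpanSingleton, LinearMap.coprod]
  have hT10 : T (1,0) = a := by rw [hTapp]; simp
  have hT01 : T (0,1) = b := by rw [hTapp]; simp
  have hbb : b + b = 0 := by
    funext x
    rcases zmod2_cases (b x) with h | h <;>
      simp only [Pi.add_apply, Pi.zero_apply, h] <;> decide
  have habne : a + b ≠ 0 := by
    intro h
    apply hab
    have h2 : a + (b + b) = 0 + b := by rw [← add_assoc, h, zero_add]
    rw [hbb, add_zero, zero_add] at h2
    exact h2
  have hTker : ∀ w, T w = 0 → w = 0 := by
    intro w hw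
    rcases zmod2_cases w.1 with h1 | h1 <;> rcases zmod2_cases w.2 with h2 | h2 <;>
      rw [hTapp] at hw <;> rw [h1, h2] at hw <;> simp at hw <;>
      first
        | (exact Prod.ext h1 h2)
        | (exact absurd hw ha)
        | (exact absurd hw hb)
        | (exact absurd hw habne)
        | (exact absurd hw hab)
  have hTinj : Function.Injective T := by
    intro w w' h
    have h0 : T (w - w') = 0 := by rw [map_sub, h, sub_self]
    have := hTker _ h0
    rwa [sub_eq_zero] at this
  obtain ⟨K, hK⟩ := Submodule.exists_isCompl (LinearMap.range T)
  haveI : Fintype ↥K := Fintype.ofFinite ↥K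
  set E : (W2 × ↥K) ≃ (Fin n → ZMod 2) :=
    ((LinearEquiv.ofInjective T hTinj).toEquiv.prodCongr (Equiv.refl ↥K)).trans
      (Submodule.prodEquivOfIsCompl (LinearMap.range T) K hK).toEquiv with hE
  have hEapp : ∀ (w : W2) (k : ↥K), E (w, k) = T w + ↑k := by
    intro w k
    simp [hE, Submodule.prodEquivOfIsCompl, LinearEquiv.ofBijective_apply, LinearMap.coprod_apply, LinearEquiv.ofInjective_apply]
    rfl
  set N := Fintype.card ↥K with hN
  have hcardV : Fintype.card (Fin n → ZMod 2) = 2^n := by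
    rw [Fintype.card_fun]
    simp
  have hcard4N : 2^n = 4 * N := by
    rw [← hcardV, ← Fintype.card_congr E, Fintype.card_prod, hN]
    congr 1
  have hN1 : 1 ≤ N := by
    have : 0 < 2^n := Nat.pow_pos (by norm_num)
    omega
  -- function space equivalence
  set FE : (W2 × ↥K → ZMod 2) ≃ ((Fin n → ZMod 2) → ZMod 2) :=
    Equiv.arrowCongr E (Equiv.refl (ZMod 2)) with hFE
  have hFEapp : ∀ (φ : W2 × ↥K → ZMod 2) (z : W2 × ↥K), (FE φ) (E z) = φ z := by
    intro φ z
    simp [hFE]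
  have hshift : ∀ (z : W2 × ↥K) (w0 : W2), E z + T w0 = E (z.1 + w0, z.2) := by
    intro z w0
    rw [show z = (z.1, z.2) from rfl, hEapp, hEapp, map_add]
    abel
  have hacA : ∀ φ : W2 × ↥K → ZMod 2, ac (FE φ) a = acW φ (1,0) := by
    intro φ
    rw [show ac (FE φ) a = ∑ x : Fin n → ZMod 2, chiZ ((FE φ) x + (FE φ) (x + a)) from rfl]
    rw [← Equiv.sum_comp E (fun x => chiZ ((FE φ) x + (FE φ) (x + a))), acW]
    refine Finset.sum_congr rfl (fun z _ => ?_)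
    rw [hFEapp φ z, show E z + a = E (z.1 + (1,0), z.2) from by rw [← hT10, hshift],
      hFEapp φ _]
  have hacB : ∀ φ : W2 × ↥K → ZMod 2, ac (FE φ) b = acW φ (0,1) := by
    intro φ
    rw [show ac (FE φ) b = ∑ x : Fin n → ZMod 2, chiZ ((FE φ) x + (FE φ) (x + b)) from rfl]
    rw [← Equiv.sum_comp E (fun x => chiZ ((FE φ) x + (FE φ) (x + b))), acW]
    refine Finset.sum_congr rfl (fun z _ => ?_)
    rw [hFEapp φ z, show E z + b = E (z.1 + (0,1), z.2) from by rw [← hT01, hshift],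
      hFEapp φ _]
  -- rewrite the expectation
  simp only [ev]
  have hcardF : (Fintype.card ((Fin n → ZMod 2) → ZMod 2) : ℝ) = 2^(4*N) := by
    rw [Fintype.card_fun, hcardV, hcard4N]
    push_cast
    rfl
  rw [hcardF, div_le_iff₀ (by positivity)]
  have hsum : ∑ f : (Fin n → ZMod 2) → ZMod 2, ((ac f a : ℝ) * (ac f b : ℝ))^(2*p)
      = ∑ φ : W2 × ↥K → ZMod 2, ((acW φ (1,0) : ℝ) * (acW φ (0,1) : ℝ))^(2*p) := by
    rw [← Equiv.sum_comp FE (fun f => ((ac f a : ℝ) * (ac f b : ℝ))^(2*p))]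
    refine Finset.sum_congr rfl (fun φ _ => ?_)
    rw [hacA φ, hacB φ]
  rw [hsum]
  refine (main_bound p hp hN1).trans ?_
  -- final arithmetic
  have hc : (2:ℝ)^n = 4*(N:ℝ) := by exact_mod_cast hcard4N
  have hfac : ((Nat.factorial (2*p) : ℝ) / (Nat.factorial p)) = 2^p * Mp p := by
    rw [mp_cast]
    have h1 : (Nat.factorial p : ℝ) ≠ 0 := Nat.cast_ne_zero.2 (Nat.factorial_ne_zero p)
    field_simp
  have hxeq : 1 + 8*(p:ℝ)^2 / ((2:ℝ)^n*(2*(p:ℝ)-1)) = 1 + 2*(p:ℝ)^2/((N:ℝ)*(2*(p:ℝ)-1)) := by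
    rw [hc]
    congr 1
    rw [show (8:ℝ)*(p:ℝ)^2 = 4*(2*(p:ℝ)^2) by ring,
      show 4*(N:ℝ)*(2*(p:ℝ)-1) = 4*((N:ℝ)*(2*(p:ℝ)-1)) by ring]
    exact mul_div_mul_left _ _ (by norm_num)
  rw [hfac, hxeq, hc]
  rw [show ((4:ℝ)*(N:ℝ))^(2*p) = 4^(2*p) * (N:ℝ)^(2*p) from mul_pow _ _ _]
  have h64 : (64:ℝ)^p = 4^(2*p) * (2^p)^2 := by
    rw [pow_mul (4:ℝ) 2 p, ← pow_mul (2:ℝ) p 2, mul_comm p 2, pow_mul (2:ℝ) 2 p, ← mul_pow]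
    norm_num
  rw [h64]
  exact le_of_eq (by ring)
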